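/- If ξ₁(β) ≤ C < βu₀/r, then the function f_C(z) = βu₀/r - (βu₀/r - C)/(e^{θ₁(u₀)d} + (θ₁(u₀)/θ₂(u₀))e^{-θ₂(u₀)d}) · (e^{θ₁(u₀)z} + (θ₁(u₀)/θ₂(u₀))e^{-θ₂(u₀)z}) satisfies -r f_C(z) - (μ-u₀) f_C'(z) + (σ²/2) f_C''(z) + βu₀ = 0, f_C'(0) = 0, f_C(d) = C, and f_C'(z) ≥ -β for all z ∈ [0,d]. -/

import Mathlib

open Real Set

noncomputable def th1 (μ σ r u : ℝ) : ℝ := (Real.sqrt ((μ - u)^2 + 2*r*σ^2) + (μ - u)) / σ^2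
noncomputable def th2 (μ σ r u : ℝ) : ℝ := (Real.sqrt ((μ - u)^2 + 2*r*σ^2) - (μ - u)) / σ^2

noncomputable def xi1 (μ σ r d u₀ β : ℝ) : ℝ :=
  β * u₀ / r - β * (Real.exp (th1 μ σ r u₀ * d) + th1 μ σ r u₀ / th2 μ σ r u₀ * Real.exp (-(th2 μ σ r u₀) * d)) /
    (th1 μ σ r u₀ * (Real.exp (th1 μ σ r u₀ * d) - Real.exp (-(th2 μ σ r u₀) * d)))

noncomputable def fC (μ σ r d u₀ β C z : ℝ) : ℝ :=
  β * u₀ / r - (β * u₀ / r - C) /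
      (Real.exp (th1 μ σ r u₀ * d) + th1 μ σ r u₀ / th2 μ σ r u₀ * Real.exp (-(th2 μ σ r u₀) * d)) *
    (Real.exp (th1 μ σ r u₀ * z) + th1 μ σ r u₀ / th2 μ σ r u₀ * Real.exp (-(th2 μ σ r u₀) * z))

/-!
The exponents `θ₁` and `-θ₂` are the two roots of the characteristic polynomial
`σ²/2 x² - (μ - u₀) x - r` of the ODE, so every `K - A (e^{θ₁ z} + (θ₁/θ₂) e^{-θ₂ z})` solves the
ODE with constant term `r K`; the weight `θ₁/θ₂` makes the slope at `0` vanish, and `A` is chosen so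
that the value at `d` is `C`. The slope `-A θ₁ (e^{θ₁ z} - e^{-θ₂ z})` is decreasing in `z`, so it
is at least `-β` on `[0, d]` iff it is at `z = d`, which is the condition `ξ₁(β) ≤ C`.
-/

section Exponents

variable {μ σ r u : ℝ}

lemma abs_lt_sqrt_sq_add (m : ℝ) {c : ℝ} (hc : 0 < c) : |m| < √(m ^ 2 + c) := by
  rw [← sqrt_sq_eq_abs]
  exact sqrt_lt_sqrt (sq_nonneg m) (lt_add_of_pos_right _ hc)

lemma th1_pos (hσ : 0 < σ) (hr : 0 < r) : 0 < th1 μ σ r u := by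
  have := abs_lt_sqrt_sq_add (μ - u) (by positivity : 0 < 2 * r * σ ^ 2)
  exact div_pos (by linarith [neg_abs_le (μ - u)]) (by positivity)

lemma th2_pos (hσ : 0 < σ) (hr : 0 < r) : 0 < th2 μ σ r u := by
  have := abs_lt_sqrt_sq_add (μ - u) (by positivity : 0 < 2 * r * σ ^ 2)
  exact div_pos (by linarith [le_abs_self (μ - u)]) (by positivity)

lemma th1_charPoly (hσ : σ ≠ 0) (hr : 0 ≤ r) :
    σ ^ 2 / 2 * th1 μ σ r u ^ 2 - (μ - u) * th1 μ σ r u - r = 0 := by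
  have hs := sq_sqrt (by positivity : 0 ≤ (μ - u) ^ 2 + 2 * r * σ ^ 2)
  unfold th1
  generalize √((μ - u) ^ 2 + 2 * r * σ ^ 2) = s at hs ⊢
  field_simp
  linear_combination hs

lemma th2_charPoly (hσ : σ ≠ 0) (hr : 0 ≤ r) :
    σ ^ 2 / 2 * th2 μ σ r u ^ 2 + (μ - u) * th2 μ σ r u - r = 0 := by
  have hs := sq_sqrt (by positivity : 0 ≤ (μ - u) ^ 2 + 2 * r * σ ^ 2)
  unfold th2
  generalize √((μ - u) ^ 2 + 2 * r * σ ^ 2) = s at hs ⊢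
  field_simp
  linear_combination hs

end Exponents

noncomputable def expProfile (a b z : ℝ) : ℝ := exp (a * z) + a / b * exp (-b * z)

section Profile

variable {a b : ℝ}

lemma hasDerivAt_exp_mul (a z : ℝ) : HasDerivAt (fun z ↦ exp (a * z)) (a * exp (a * z)) z := by
  simpa [mul_comm] using ((hasDerivAt_id z).const_mul a).exp

lemma hasDerivAt_expProfile (hb : b ≠ 0) (z : ℝ) :
    HasDerivAt (expProfile a b) (a * (exp (a * z) - exp (-b * z))) z := by
  refine ((hasDerivAt_exp_mul a z).add ((hasDerivAt_exp_mul (-b) z).const_mul (a / b))).congr_deriv ?_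
  field_simp
  ring

lemma hasDerivAt_slope (a b z : ℝ) :
    HasDerivAt (fun z ↦ a * (exp (a * z) - exp (-b * z)))
      (a * (a * exp (a * z) + b * exp (-b * z))) z := by
  refine (((hasDerivAt_exp_mul a z).sub (hasDerivAt_exp_mul (-b) z)).const_mul a).congr_deriv ?_
  ring

lemma expProfile_pos (ha : 0 ≤ a) (hb : 0 ≤ b) (z : ℝ) : 0 < expProfile a b z := by
  unfold expProfile
  positivity

lemma monotone_exp_sub_exp_neg (ha : 0 ≤ a) (hb : 0 ≤ b) :
    Monotone fun z ↦ exp (a * z) - exp (-b * z) := fun z w hzw ↦ by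
  have h1 : exp (a * z) ≤ exp (a * w) := exp_le_exp.mpr (by nlinarith)
  have h2 : exp (-b * w) ≤ exp (-b * z) := exp_le_exp.mpr (by nlinarith)
  simp only
  linarith

lemma exp_sub_exp_neg_pos (ha : 0 < a) (hb : 0 ≤ b) {d : ℝ} (hd : 0 < d) :
    0 < exp (a * d) - exp (-b * d) :=
  sub_pos.mpr (exp_lt_exp.mpr (by nlinarith))

lemma antitone_slope {A : ℝ} (hA : 0 ≤ A) (ha : 0 ≤ a) (hb : 0 ≤ b) :
    Antitone fun z ↦ -A * (a * (exp (a * z) - exp (-b * z))) := fun z w hzw ↦ by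
  have := mul_le_mul_of_nonneg_left (monotone_exp_sub_exp_neg ha hb hzw) (mul_nonneg hA ha)
  simp only
  linarith

lemma neg_le_slope_of_sub_div_le {d K β C : ℝ} (ha : 0 < a) (hb : 0 < b) (hd : 0 < d)
    (h : K - β * expProfile a b d / (a * (exp (a * d) - exp (-b * d))) ≤ C) :
    -β ≤ -((K - C) / expProfile a b d) * (a * (exp (a * d) - exp (-b * d))) := by
  have hP := expProfile_pos ha.le hb.le d
  have hE := mul_pos ha (exp_sub_exp_neg_pos ha hb.le hd)
  have h' : K - C ≤ β * expProfile a b d / (a * (exp (a * d) - exp (-b * d))) := by linarith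
  rw [le_div_iff₀ hE] at h'
  rw [neg_mul, neg_le_neg_iff, div_mul_eq_mul_div, div_le_iff₀ hP]
  linarith

variable (K A : ℝ)

lemma deriv_sub_mul_expProfile (hb : b ≠ 0) :
    deriv (fun z ↦ K - A * expProfile a b z) = fun z ↦ -A * (a * (exp (a * z) - exp (-b * z))) :=
  funext fun z ↦ by simpa using (((hasDerivAt_expProfile hb z).const_mul A).const_sub K).deriv

lemma deriv_deriv_sub_mul_expProfile (hb : b ≠ 0) :
    deriv (deriv fun z ↦ K - A * expProfile a b z) =
      fun z ↦ -A * (a * (a * exp (a * z) + b * exp (-b * z))) := by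
  rw [deriv_sub_mul_expProfile K A hb]
  exact funext fun z ↦ ((hasDerivAt_slope a b z).const_mul (-A)).deriv

theorem sub_mul_expProfile_ode {m σ r : ℝ} {g : ℝ → ℝ} (hg : g = fun z ↦ K - A * expProfile a b z)
    (hb : b ≠ 0) (hpa : σ ^ 2 / 2 * a ^ 2 - m * a - r = 0)
    (hpb : σ ^ 2 / 2 * b ^ 2 + m * b - r = 0) (z : ℝ) :
    -r * g z - m * deriv g z + σ ^ 2 / 2 * deriv (deriv g) z + r * K = 0 := by
  subst hg
  rw [deriv_deriv_sub_mul_expProfile K A hb, deriv_sub_mul_expProfile K A hb]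
  simp only [expProfile]
  have hab : a / b * b = a := div_mul_cancel₀ a hb
  linear_combination (-A * exp (a * z)) * hpa + (-A * (a / b) * exp (-b * z)) * hpb
    + (A * exp (-b * z) * (m + σ ^ 2 / 2 * b)) * hab

end Profile

theorem stmt11_general (μ σ r d u₀ β C : ℝ) (hσ : 0 < σ) (hr : 0 < r) (hd : 0 < d)
    (hC1 : xi1 μ σ r d u₀ β ≤ C) (hC2 : C < β * u₀ / r) :
    (∀ z ∈ Set.Icc 0 d,
      -r * fC μ σ r d u₀ β C z - (μ - u₀) * deriv (fC μ σ r d u₀ β C) z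
        + σ^2/2 * deriv (deriv (fC μ σ r d u₀ β C)) z + β * u₀ = 0) ∧
    deriv (fC μ σ r d u₀ β C) 0 = 0 ∧
    fC μ σ r d u₀ β C d = C ∧
    (∀ z ∈ Set.Icc 0 d, deriv (fC μ σ r d u₀ β C) z ≥ -β) := by
  set a := th1 μ σ r u₀
  set b := th2 μ σ r u₀
  have ha : 0 < a := th1_pos hσ hr
  have hb : 0 < b := th2_pos hσ hr
  set K := β * u₀ / r
  set A := (K - C) / expProfile a b d
  have hP := expProfile_pos ha.le hb.le d
  have hA : 0 ≤ A := div_nonneg (by linarith) hP.le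
  have hf : fC μ σ r d u₀ β C = fun z ↦ K - A * expProfile a b z := rfl
  have hf' := deriv_sub_mul_expProfile K A (a := a) hb.ne'
  refine ⟨fun z _ ↦ ?_, by simp [hf, hf'], ?_, fun z hz ↦ ?_⟩
  · have := sub_mul_expProfile_ode K A hf hb.ne' (th1_charPoly hσ.ne' hr.le)
      (th2_charPoly hσ.ne' hr.le) z
    rwa [mul_div_cancel₀ _ hr.ne'] at this
  · rw [hf]
    change K - (K - C) / _ * _ = C
    rw [div_mul_cancel₀ _ hP.ne', sub_sub_cancel]
  · rw [hf, hf']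
    exact (neg_le_slope_of_sub_div_le ha hb hd hC1).trans (antitone_slope hA ha.le hb.le hz.2)

theorem stmt11 (μ σ r d u₀ β C : ℝ) (hσ : 0 < σ) (hr : 0 < r) (hd : 0 < d) (hu₀ : 0 < u₀)
    (hβ : 0 < β) (hC1 : xi1 μ σ r d u₀ β ≤ C) (hC2 : C < β * u₀ / r) :
    (∀ z ∈ Set.Icc 0 d,
      -r * fC μ σ r d u₀ β C z - (μ - u₀) * deriv (fC μ σ r d u₀ β C) z
        + σ^2/2 * deriv (deriv (fC μ σ r d u₀ β C)) z + β * u₀ = 0) ∧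
    deriv (fC μ σ r d u₀ β C) 0 = 0 ∧
    fC μ σ r d u₀ β C d = C ∧
    (∀ z ∈ Set.Icc 0 d, deriv (fC μ σ r d u₀ β C) z ≥ -β) :=
  stmt11_general μ σ r d u₀ β C hσ hr hd hC1 hC2
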